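/- arXiv:2602.03606 — 4 statements merged into one kernel-verified Lean document; each statement's English description precedes it below -/
import Mathlib

section
/- Let B be the open unit ball in ℝ^d with d ≥ 2, and let f ∈ C^∞(ℝ^d) be a real function vanishing on the boundary ∂B. Then ∫_B (1 + |x|²) |∇f(x)|² dx ≥ (d-1) ∫_B f(x)² dx. -/
open MeasureTheory Metric Set

noncomputable section

lemma aux_volumeIoiPow (n : ℕ) (F : ℝ → ℝ) :
    ∫ x : Set.Ioi (0:ℝ), F x ∂(Measure.volumeIoiPow n)
      = ∫ y in Set.Ioi (0:ℝ), y ^ n * F y := by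
  simp only [Measure.volumeIoiPow, ENNReal.ofReal]
  rw [integral_withDensity_eq_integral_smul
      ((measurable_subtype_coe.pow_const _).real_toNNReal),
    integral_subtype_comap measurableSet_Ioi fun a ↦ Real.toNNReal (a ^ n) • F a]
  refine setIntegral_congr_fun measurableSet_Ioi fun x hx ↦ ?_
  rw [NNReal.smul_def, Real.coe_toNNReal _ (pow_nonneg hx.out.le _), smul_eq_mul]

lemma radial_zero (d : ℕ) (hd : 1 ≤ d) (g : EuclideanSpace ℝ (Fin d) → ℝ)
    (hg : Continuous g)
    (h : ∀ ω : EuclideanSpace ℝ (Fin d), ‖ω‖ = 1 →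
      ∫ r in Set.Ioo (0:ℝ) 1, r ^ (d - 1) * g (r • ω) = 0) :
    ∫ x in Metric.ball (0 : EuclideanSpace ℝ (Fin d)) 1, g x = 0 := by
  classical
  have hdim : Module.finrank ℝ (EuclideanSpace ℝ (Fin d)) = d := finrank_euclideanSpace_fin
  haveI : Nontrivial (EuclideanSpace ℝ (Fin d)) :=
    Module.nontrivial_of_finrank_pos (R := ℝ) (by rw [hdim]; omega)
  set T := homeomorphUnitSphereProd (EuclideanSpace ℝ (Fin d)) with hT
  have mp := (volume : Measure (EuclideanSpace ℝ (Fin d))).measurePreserving_homeomorphUnitSphereProd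
  have memb : MeasurableEmbedding (T.symm) := T.symm.measurableEmbedding
  set G := (Metric.ball (0:EuclideanSpace ℝ (Fin d)) 1).indicator g with hGdef
  have hGint : Integrable G := by
    rw [hGdef, integrable_indicator_iff measurableSet_ball]
    exact (hg.continuousOn.integrableOn_compact (isCompact_closedBall 0 1)).mono_set
      ball_subset_closedBall
  have hcomp : ∀ p : sphere (0:EuclideanSpace ℝ (Fin d)) 1 × Set.Ioi (0:ℝ),
      G ((T.symm p : ({0}ᶜ : Set (EuclideanSpace ℝ (Fin d)))) : EuclideanSpace ℝ (Fin d))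
        = Set.indicator (Set.Iio (1:ℝ))
            (fun s => g (s • (p.1 : EuclideanSpace ℝ (Fin d)))) (p.2 : ℝ) := by
    rintro ⟨⟨ω, hω⟩, ⟨r, hr⟩⟩
    have hco : ((T.symm (⟨ω,hω⟩, ⟨r,hr⟩) : ({0}ᶜ : Set (EuclideanSpace ℝ (Fin d))))
        : EuclideanSpace ℝ (Fin d)) = r • ω := by
      simp [hT]
    have hnorm : ‖r • ω‖ = r := by
      rw [norm_smul, mem_sphere_zero_iff_norm.1 hω, Real.norm_eq_abs,
        abs_of_pos (Set.mem_Ioi.1 hr), mul_one]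
    rw [hco]
    by_cases h1 : r < 1
    · rw [hGdef, Set.indicator_of_mem (mem_ball_zero_iff.2 (by rw [hnorm]; exact h1)) g,
        Set.indicator_of_mem (show ((⟨r, hr⟩ : Set.Ioi (0:ℝ)) : ℝ) ∈ Set.Iio 1 from h1)]
    · rw [hGdef, Set.indicator_of_notMem
        (fun hm => h1 (by rw [← hnorm]; exact mem_ball_zero_iff.1 hm)) g,
        Set.indicator_of_notMem
          (show ¬ ((⟨r, hr⟩ : Set.Ioi (0:ℝ)) : ℝ) ∈ Set.Iio 1 from fun hm => h1 hm)]
  have mp' : MeasurePreserving (⇑T.symm)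
      ((volume : Measure (EuclideanSpace ℝ (Fin d))).toSphere.prod
        (Measure.volumeIoiPow (Module.finrank ℝ (EuclideanSpace ℝ (Fin d)) - 1)))
      ((volume : Measure (EuclideanSpace ℝ (Fin d))).comap Subtype.val) :=
    mp.symm T.toMeasurableEquiv
  have hGc : Integrable (fun x : ({0}ᶜ : Set (EuclideanSpace ℝ (Fin d))) => G x)
      ((volume : Measure (EuclideanSpace ℝ (Fin d))).comap Subtype.val) := by
    have emb := MeasurableEmbedding.subtype_coe
      (measurableSet_singleton (0:EuclideanSpace ℝ (Fin d))).compl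
    have h2 := emb.integrable_map_iff (g := G)
      (μ := (volume : Measure (EuclideanSpace ℝ (Fin d))).comap Subtype.val)
    rw [emb.map_comap, Subtype.range_coe] at h2
    exact h2.1 hGint.restrict
  have hGprod : Integrable
      (fun p : sphere (0:EuclideanSpace ℝ (Fin d)) 1 × Set.Ioi (0:ℝ) =>
        G ((T.symm p : ({0}ᶜ : Set (EuclideanSpace ℝ (Fin d)))) : EuclideanSpace ℝ (Fin d)))
      ((volume : Measure (EuclideanSpace ℝ (Fin d))).toSphere.prod
        (Measure.volumeIoiPow (Module.finrank ℝ (EuclideanSpace ℝ (Fin d)) - 1))) :=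
    (mp'.integrable_comp_emb memb).2 hGc
  have e0 : ∫ x in Metric.ball (0 : EuclideanSpace ℝ (Fin d)) 1, g x = ∫ x, G x :=
    (integral_indicator measurableSet_ball).symm
  have e1 : ∫ x : ({0}ᶜ : Set (EuclideanSpace ℝ (Fin d))), G x
        ∂((volume : Measure (EuclideanSpace ℝ (Fin d))).comap Subtype.val)
      = ∫ x, G x := by
    rw [integral_subtype_comap (measurableSet_singleton 0).compl,
      restrict_compl_singleton]
  have e2 : ∫ p : sphere (0:EuclideanSpace ℝ (Fin d)) 1 × Set.Ioi (0:ℝ),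
        G ((T.symm p : ({0}ᶜ : Set (EuclideanSpace ℝ (Fin d)))) : EuclideanSpace ℝ (Fin d))
        ∂((volume : Measure (EuclideanSpace ℝ (Fin d))).toSphere.prod
          (Measure.volumeIoiPow (Module.finrank ℝ (EuclideanSpace ℝ (Fin d)) - 1)))
      = ∫ x : ({0}ᶜ : Set (EuclideanSpace ℝ (Fin d))), G x
        ∂((volume : Measure (EuclideanSpace ℝ (Fin d))).comap Subtype.val) :=
    mp'.integral_comp memb (fun x : ({0}ᶜ : Set (EuclideanSpace ℝ (Fin d))) => G x)
  rw [e0, ← e1, ← e2, integral_prod _ hGprod]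
  have hinner : ∀ ω : sphere (0:EuclideanSpace ℝ (Fin d)) 1,
      ∫ r : Set.Ioi (0:ℝ),
        G ((T.symm (ω, r) : ({0}ᶜ : Set (EuclideanSpace ℝ (Fin d)))) : EuclideanSpace ℝ (Fin d))
        ∂(Measure.volumeIoiPow (Module.finrank ℝ (EuclideanSpace ℝ (Fin d)) - 1)) = 0 := by
    intro ω
    have : ∀ r : Set.Ioi (0:ℝ),
        G ((T.symm (ω, r) : ({0}ᶜ : Set (EuclideanSpace ℝ (Fin d)))) : EuclideanSpace ℝ (Fin d))
          = Set.indicator (Set.Iio (1:ℝ))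
              (fun s => g (s • (ω : EuclideanSpace ℝ (Fin d)))) (r : ℝ) :=
      fun r => hcomp (ω, r)
    rw [integral_congr_ae (Filter.Eventually.of_forall this), aux_volumeIoiPow]
    have : ∫ y in Set.Ioi (0:ℝ), y ^ (Module.finrank ℝ (EuclideanSpace ℝ (Fin d)) - 1) *
          Set.indicator (Set.Iio (1:ℝ)) (fun s => g (s • (ω : EuclideanSpace ℝ (Fin d)))) y
        = ∫ y in Set.Ioi (0:ℝ), Set.indicator (Set.Iio (1:ℝ))
            (fun s => s ^ (d - 1) * g (s • (ω : EuclideanSpace ℝ (Fin d)))) y := by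
      refine setIntegral_congr_fun measurableSet_Ioi fun y _ ↦ ?_
      rw [hdim]
      by_cases hy : y ∈ Set.Iio (1:ℝ)
      · rw [Set.indicator_of_mem hy, Set.indicator_of_mem hy]
      · rw [Set.indicator_of_notMem hy, Set.indicator_of_notMem hy, mul_zero]
    rw [this, setIntegral_indicator measurableSet_Iio, Set.Ioi_inter_Iio]
    exact h ω (mem_sphere_zero_iff_norm.1 ω.2)
  rw [integral_congr_ae (Filter.Eventually.of_forall hinner), integral_zero]

lemma ray_ftc (d : ℕ) (hd : 1 ≤ d) (f : EuclideanSpace ℝ (Fin d) → ℝ)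
    (hf : ContDiff ℝ (⊤ : ℕ∞) f) (ω : EuclideanSpace ℝ (Fin d)) (hω : ‖ω‖ = 1) (h0 : f ω = 0) :
    ∫ r in Set.Ioo (0:ℝ) 1, r ^ (d - 1) *
        ((d : ℝ) * f (r • ω) ^ 2 + 2 * f (r • ω) * (fderiv ℝ f (r • ω)) (r • ω)) = 0 := by
  have hfc : Continuous f := hf.continuous
  have hDc : Continuous fun x : EuclideanSpace ℝ (Fin d) => fderiv ℝ f x :=
    hf.continuous_fderiv (by simp)
  have hcont : Continuous fun r : ℝ => r ^ (d - 1) *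
      ((d : ℝ) * f (r • ω) ^ 2 + 2 * f (r • ω) * (fderiv ℝ f (r • ω)) (r • ω)) := by
    have hsm : Continuous fun r : ℝ => r • ω := continuous_id.smul continuous_const
    exact (continuous_pow _).mul
      (((continuous_const.mul ((hfc.comp hsm).pow 2)).add
        ((continuous_const.mul (hfc.comp hsm)).mul
          ((hDc.comp hsm).clm_apply hsm))))
  have hder : ∀ r : ℝ, HasDerivAt (fun s : ℝ => s ^ d * f (s • ω) ^ 2)
      (r ^ (d - 1) *
        ((d : ℝ) * f (r • ω) ^ 2 + 2 * f (r • ω) * (fderiv ℝ f (r • ω)) (r • ω))) r := by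
    intro r
    have h1 : HasDerivAt (fun s : ℝ => s • ω) ω r := by
      simpa using (hasDerivAt_id r).smul_const ω
    have h2 : HasDerivAt (fun s : ℝ => f (s • ω)) ((fderiv ℝ f (r • ω)) ω) r :=
      (hf.differentiable (by simp) (r • ω)).hasFDerivAt.comp_hasDerivAt r h1
    have h3 : HasDerivAt (fun s : ℝ => f (s • ω) ^ 2)
        (2 * f (r • ω) * ((fderiv ℝ f (r • ω)) ω)) r := by
      have := h2.fun_pow 2
      simpa [mul_comm, mul_assoc, mul_left_comm] using this
    have h4 := (hasDerivAt_pow d r).fun_mul h3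
    refine h4.congr_deriv ?_
    have hmap : (fderiv ℝ f (r • ω)) (r • ω) = r * (fderiv ℝ f (r • ω)) ω := by
      rw [_root_.map_smul, smul_eq_mul]
    have hrd : r ^ d = r ^ (d - 1) * r := by
      rw [← pow_succ, Nat.sub_add_cancel hd]
    rw [hmap, hrd]
    ring
  have heq : ∫ r in Set.Ioo (0:ℝ) 1, r ^ (d - 1) *
        ((d : ℝ) * f (r • ω) ^ 2 + 2 * f (r • ω) * (fderiv ℝ f (r • ω)) (r • ω))
      = ∫ r in (0:ℝ)..1, r ^ (d - 1) *
        ((d : ℝ) * f (r • ω) ^ 2 + 2 * f (r • ω) * (fderiv ℝ f (r • ω)) (r • ω)) := by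
    rw [intervalIntegral.integral_of_le zero_le_one, ← integral_Ioc_eq_integral_Ioo]
  rw [heq, intervalIntegral.integral_eq_sub_of_hasDerivAt (fun t _ => hder t)
      (hcont.intervalIntegrable 0 1)]
  simp [h0, zero_pow (by omega : d ≠ 0)]

end

/-- For `d ≥ 2` and a smooth real function `f` on `ℝ^d` vanishing on the unit sphere,
`∫_B (1 + |x|²)|∇f|² dx ≥ (d-1) ∫_B f² dx` on the unit ball `B`. -/
theorem stmt2 (d : ℕ) (hd : 2 ≤ d) (f : EuclideanSpace ℝ (Fin d) → ℝ)
    (hf : ContDiff ℝ (⊤ : ℕ∞) f)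
    (hbd : ∀ x : EuclideanSpace ℝ (Fin d), ‖x‖ = 1 → f x = 0) :
    (d - 1 : ℝ) * ∫ x in Metric.ball (0 : EuclideanSpace ℝ (Fin d)) 1, (f x) ^ 2
      ≤ ∫ x in Metric.ball (0 : EuclideanSpace ℝ (Fin d)) 1,
          (1 + ‖x‖ ^ 2) * ‖gradient f x‖ ^ 2 := by
  classical
  have hfc : Continuous f := hf.continuous
  have hDc : Continuous fun x : EuclideanSpace ℝ (Fin d) => fderiv ℝ f x :=
    hf.continuous_fderiv (by simp)
  have hDxc : Continuous fun x : EuclideanSpace ℝ (Fin d) => (fderiv ℝ f x) x :=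
    hDc.clm_apply continuous_id
  have hgradeq : ∀ x : EuclideanSpace ℝ (Fin d),
      ‖gradient f x‖ = ‖fderiv ℝ f x‖ := fun x =>
    LinearIsometryEquiv.norm_map (InnerProductSpace.toDual ℝ _).symm (fderiv ℝ f x)
  have hgradc : Continuous fun x : EuclideanSpace ℝ (Fin d) => gradient f x :=
    (InnerProductSpace.toDual ℝ _).symm.continuous.comp hDc
  have hIball : ∀ (u : EuclideanSpace ℝ (Fin d) → ℝ), Continuous u →
      IntegrableOn u (Metric.ball (0 : EuclideanSpace ℝ (Fin d)) 1) := fun u hu =>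
    (hu.continuousOn.integrableOn_compact (isCompact_closedBall 0 1)).mono_set
      ball_subset_closedBall
  have hkey : ∫ x in Metric.ball (0 : EuclideanSpace ℝ (Fin d)) 1,
      ((d : ℝ) * f x ^ 2 + 2 * f x * (fderiv ℝ f x) x) = 0 := by
    refine radial_zero d (by omega) _ ?_ ?_
    · exact (continuous_const.mul (hfc.pow 2)).add
        ((continuous_const.mul hfc).mul hDxc)
    · intro ω hω
      exact ray_ftc d (by omega) f hf ω hω (hbd ω hω)
  have hInt2 : IntegrableOn
      (fun x => (d : ℝ) * f x ^ 2 + 2 * f x * (fderiv ℝ f x) x)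
      (Metric.ball (0 : EuclideanSpace ℝ (Fin d)) 1) :=
    hIball _ ((continuous_const.mul (hfc.pow 2)).add ((continuous_const.mul hfc).mul hDxc))
  have hInt3 : IntegrableOn
      (fun x => (1 + ‖x‖ ^ 2) * ‖gradient f x‖ ^ 2)
      (Metric.ball (0 : EuclideanSpace ℝ (Fin d)) 1) :=
    hIball _ ((continuous_const.add (continuous_norm.pow 2)).mul ((hgradc.norm).pow 2))
  have hInt4 : IntegrableOn
      (fun x => -(f x) ^ 2 - 2 * f x * (fderiv ℝ f x) x)
      (Metric.ball (0 : EuclideanSpace ℝ (Fin d)) 1) :=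
    hIball _ (((hfc.pow 2).neg).sub ((continuous_const.mul hfc).mul hDxc))
  have hpt : ∀ x ∈ Metric.ball (0 : EuclideanSpace ℝ (Fin d)) 1,
      -(f x) ^ 2 - 2 * f x * (fderiv ℝ f x) x ≤ (1 + ‖x‖ ^ 2) * ‖gradient f x‖ ^ 2 := by
    intro x _
    rw [hgradeq x]
    have h1 : |(fderiv ℝ f x) x| ≤ ‖fderiv ℝ f x‖ * ‖x‖ := by
      simpa [Real.norm_eq_abs] using (fderiv ℝ f x).le_opNorm x
    have h2 : ((fderiv ℝ f x) x) ^ 2 ≤ (‖fderiv ℝ f x‖ * ‖x‖) ^ 2 := by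
      rw [← sq_abs]
      exact pow_le_pow_left₀ (abs_nonneg _) h1 2
    nlinarith [sq_nonneg (f x + (fderiv ℝ f x) x), sq_nonneg ‖fderiv ℝ f x‖, sq_nonneg ‖x‖]
  calc (d - 1 : ℝ) * ∫ x in Metric.ball (0 : EuclideanSpace ℝ (Fin d)) 1, (f x) ^ 2
      = ∫ x in Metric.ball (0 : EuclideanSpace ℝ (Fin d)) 1, (d - 1 : ℝ) * (f x) ^ 2 :=
        (integral_const_mul _ _).symm
    _ = ∫ x in Metric.ball (0 : EuclideanSpace ℝ (Fin d)) 1,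
          (((d : ℝ) * f x ^ 2 + 2 * f x * (fderiv ℝ f x) x)
            + (-(f x) ^ 2 - 2 * f x * (fderiv ℝ f x) x)) := by
        refine setIntegral_congr_fun measurableSet_ball fun x _ ↦ ?_
        ring
    _ = (∫ x in Metric.ball (0 : EuclideanSpace ℝ (Fin d)) 1,
          ((d : ℝ) * f x ^ 2 + 2 * f x * (fderiv ℝ f x) x))
        + ∫ x in Metric.ball (0 : EuclideanSpace ℝ (Fin d)) 1,
          (-(f x) ^ 2 - 2 * f x * (fderiv ℝ f x) x) := integral_add hInt2 hInt4
    _ = ∫ x in Metric.ball (0 : EuclideanSpace ℝ (Fin d)) 1,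
          (-(f x) ^ 2 - 2 * f x * (fderiv ℝ f x) x) := by rw [hkey, zero_add]
    _ ≤ ∫ x in Metric.ball (0 : EuclideanSpace ℝ (Fin d)) 1,
          (1 + ‖x‖ ^ 2) * ‖gradient f x‖ ^ 2 :=
        setIntegral_mono_on hInt4 hInt3 measurableSet_ball hpt
end

section
/- Let 𝔏 be the space of real tempered distributions f on ℝ (modulo the constraint of pairing with Schwartz functions of vanishing integral) whose Fourier transform f̂ is a measurable function with ∫_0^∞ p |f̂(p)|² dp < ∞, equipped with the inner product ⟨f,g⟩ = Re ∫_0^∞ p f̂(−p) ĝ(p) dp. Then 𝔏 is complete, i.e., a real Hilbert space. -/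
/-! On `(0, ∞)` the norm of `𝔏` is the norm of `L²((0, ∞), p dp)`, a complete space, so a Cauchy
sequence has a limit `g` there. A strongly measurable representative of `g`, extended to `ℝ` by
`G (-p) = conj (G p)`, is the limit in `𝔏`. -/

open MeasureTheory Filter Topology

open scoped ENNReal

noncomputable def weightedHalfLine : Measure ℝ :=
  (volume.restrict (Set.Ioi 0)).withDensity fun p => ENNReal.ofReal p

lemma eLpNorm_two_sq_eq_lintegral {α E : Type*} [MeasurableSpace α] [NormedAddCommGroup E]
    (f : α → E) (μ : Measure α) : eLpNorm f 2 μ ^ 2 = ∫⁻ x, ‖f x‖ₑ ^ 2 ∂μ := by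
  simpa using eLpNorm_nnreal_pow_eq_lintegral (f := f) (μ := μ) (p := 2) two_ne_zero

lemma setLIntegral_Ioi_mul_norm_sq_eq {E : Type*} [NormedAddCommGroup E] (f : ℝ → E) :
    ∫⁻ p in Set.Ioi 0, ENNReal.ofReal (p * ‖f p‖ ^ 2) = eLpNorm f 2 weightedHalfLine ^ 2 := by
  rw [eLpNorm_two_sq_eq_lintegral, weightedHalfLine,
    lintegral_withDensity_eq_lintegral_mul_non_measurable _ ENNReal.measurable_ofReal
      (ae_of_all _ fun _ => ENNReal.ofReal_lt_top)]
  refine setLIntegral_congr_fun measurableSet_Ioi fun p hp => ?_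
  rw [Pi.mul_apply, ENNReal.ofReal_mul (le_of_lt hp), ENNReal.ofReal_pow (norm_nonneg _),
    ofReal_norm]

lemma memLp_weightedHalfLine_two_iff {E : Type*} [NormedAddCommGroup E] {f : ℝ → E}
    (hf : AEStronglyMeasurable f weightedHalfLine) :
    MemLp f 2 weightedHalfLine ↔ ∫⁻ p in Set.Ioi 0, ENNReal.ofReal (p * ‖f p‖ ^ 2) < ⊤ := by
  simp [MemLp, hf, setLIntegral_Ioi_mul_norm_sq_eq]

theorem exists_memLp_tendsto_eLpNorm_of_cauchy {α E : Type*} [MeasurableSpace α]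
    {μ : Measure α} [NormedAddCommGroup E] [CompleteSpace E] {p : ℝ≥0∞} [Fact (1 ≤ p)]
    {f : ℕ → α → E} (hf : ∀ n, MemLp (f n) p μ)
    (hcauchy : ∀ ε > 0, ∃ N, ∀ m ≥ N, ∀ n ≥ N, eLpNorm (f m - f n) p μ < ε) :
    ∃ g, StronglyMeasurable g ∧ MemLp g p μ ∧
      Tendsto (fun n => eLpNorm (f n - g) p μ) atTop (𝓝 0) := by
  set u : ℕ → Lp E p μ := fun n => (hf n).toLp (f n)
  have hu : CauchySeq u := EMetric.cauchySeq_iff.mpr fun ε hε => by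
    obtain ⟨N, hN⟩ := hcauchy ε hε
    refine ⟨N, fun m hm n hn => ?_⟩
    rw [Lp.edist_def, eLpNorm_congr_ae ((hf m).coeFn_toLp.sub (hf n).coeFn_toLp)]
    exact hN m hm n hn
  obtain ⟨v, hv⟩ := cauchySeq_tendsto_of_complete hu
  have hv_mk : v =ᵐ[μ] (Lp.aestronglyMeasurable v).mk v := (Lp.aestronglyMeasurable v).ae_eq_mk
  refine ⟨_, (Lp.aestronglyMeasurable v).stronglyMeasurable_mk, (Lp.memLp v).ae_eq hv_mk, ?_⟩
  refine (tendsto_iff_edist_tendsto_0.mp hv).congr fun n => ?_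
  rw [Lp.edist_def]
  exact eLpNorm_congr_ae ((hf n).coeFn_toLp.sub hv_mk)

lemma exists_forall_ge_lt_of_sq_lt_ofReal {a : ℕ → ℕ → ℝ≥0∞}
    (h : ∀ ε : ℝ, 0 < ε → ∃ N : ℕ, ∀ n ≥ N, ∀ k ≥ N, a n k ^ 2 < ENNReal.ofReal ε) :
    ∀ ε > 0, ∃ N, ∀ n ≥ N, ∀ k ≥ N, a n k < ε := by
  intro ε hε
  obtain ⟨δ, -, hδ_pos, hδε⟩ := ENNReal.lt_iff_exists_real_btwn.mp hε
  obtain ⟨N, hN⟩ := h (δ ^ 2) (pow_pos (ENNReal.ofReal_pos.mp hδ_pos) 2)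
  refine ⟨N, fun n hn k hk => lt_trans ?_ hδε⟩
  have := hN n hn k hk
  rwa [ENNReal.ofReal_pow (ENNReal.ofReal_pos.mp hδ_pos).le,
    ENNReal.pow_lt_pow_left_iff two_ne_zero] at this

noncomputable def hermitianExtension (g : ℝ → ℂ) (p : ℝ) : ℂ :=
  if 0 < p then g p else if p < 0 then starRingEnd ℂ (g (-p)) else 0

namespace hermitianExtension

variable {g : ℝ → ℂ}

lemma neg (g : ℝ → ℂ) (p : ℝ) :
    hermitianExtension g (-p) = starRingEnd ℂ (hermitianExtension g p) := by
  rcases lt_trichotomy p 0 with h | rfl | h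
  · simp [hermitianExtension, h, h.not_gt, neg_pos.mpr h]
  · simp [hermitianExtension]
  · simp [hermitianExtension, h, h.not_gt]

lemma eqOn_Ioi (g : ℝ → ℂ) : Set.EqOn (hermitianExtension g) g (Set.Ioi 0) := fun _ hp =>
  if_pos hp

lemma ae_eq : hermitianExtension g =ᵐ[weightedHalfLine] g :=
  (withDensity_absolutelyContinuous _ _).ae_le <|
    (ae_restrict_mem measurableSet_Ioi).mono fun _ hp => eqOn_Ioi g hp

lemma measurable (hg : Measurable g) : Measurable (hermitianExtension g) :=
  hg.ite measurableSet_Ioi <|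
    ((Complex.continuous_conj.measurable.comp (hg.comp measurable_neg)).ite measurableSet_Iio
      measurable_const)

end hermitianExtension

theorem stmt12_general (F : ℕ → ℝ → ℂ)
    (hmeas : ∀ n, Measurable (F n))
    (hfin : ∀ n, ∫⁻ p in Set.Ioi (0 : ℝ), ENNReal.ofReal (p * ‖F n p‖ ^ 2) < ⊤)
    (hcauchy : ∀ ε : ℝ, 0 < ε → ∃ N : ℕ, ∀ n ≥ N, ∀ k ≥ N,
      ∫⁻ p in Set.Ioi (0 : ℝ), ENNReal.ofReal (p * ‖F n p - F k p‖ ^ 2)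
        < ENNReal.ofReal ε) :
    ∃ G : ℝ → ℂ, Measurable G ∧ (∀ p : ℝ, G (-p) = starRingEnd ℂ (G p)) ∧
      (∫⁻ p in Set.Ioi (0 : ℝ), ENNReal.ofReal (p * ‖G p‖ ^ 2) < ⊤) ∧
      Tendsto (fun n => ∫⁻ p in Set.Ioi (0 : ℝ),
        ENNReal.ofReal (p * ‖F n p - G p‖ ^ 2)) atTop (𝓝 0) := by
  have hmem n : MemLp (F n) 2 weightedHalfLine :=
    (memLp_weightedHalfLine_two_iff (hmeas n).aestronglyMeasurable).mpr (hfin n)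
  have hcauchy_eLpNorm := exists_forall_ge_lt_of_sq_lt_ofReal fun ε hε => by
    simpa only [Pi.sub_apply, setLIntegral_Ioi_mul_norm_sq_eq] using hcauchy ε hε
  obtain ⟨g, hg_meas, hg_mem, hg_lim⟩ :=
    exists_memLp_tendsto_eLpNorm_of_cauchy hmem hcauchy_eLpNorm
  have hG_ae := hermitianExtension.ae_eq (g := g)
  refine ⟨hermitianExtension g, hermitianExtension.measurable hg_meas.measurable,
    hermitianExtension.neg g, ?_, ?_⟩
  · rw [setLIntegral_Ioi_mul_norm_sq_eq, eLpNorm_congr_ae hG_ae]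
    exact ENNReal.pow_lt_top hg_mem.eLpNorm_lt_top
  · simp only [← Pi.sub_apply, setLIntegral_Ioi_mul_norm_sq_eq]
    simpa [eLpNorm_congr_ae (EventuallyEq.rfl.sub hG_ae)] using
      ENNReal.Tendsto.pow (n := 2) hg_lim

/-- Completeness of the space `𝔏`: a sequence of (Fourier transforms of) real tempered
distributions, i.e. measurable functions `F n : ℝ → ℂ` with `F n (-p) = conj (F n p)`
and `∫_0^∞ p |F n p|² dp < ∞`, which is Cauchy in the norm
`‖f‖² = ∫_0^∞ p |f̂(p)|² dp`, converges in that norm to an element of `𝔏`. -/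
theorem stmt12 (F : ℕ → ℝ → ℂ)
    (hmeas : ∀ n, Measurable (F n))
    (hreal : ∀ n, ∀ p : ℝ, F n (-p) = starRingEnd ℂ (F n p))
    (hfin : ∀ n, ∫⁻ p in Set.Ioi (0 : ℝ), ENNReal.ofReal (p * ‖F n p‖ ^ 2) < ⊤)
    (hcauchy : ∀ ε : ℝ, 0 < ε → ∃ N : ℕ, ∀ n ≥ N, ∀ k ≥ N,
      ∫⁻ p in Set.Ioi (0 : ℝ), ENNReal.ofReal (p * ‖F n p - F k p‖ ^ 2)
        < ENNReal.ofReal ε) :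
    ∃ G : ℝ → ℂ, Measurable G ∧ (∀ p : ℝ, G (-p) = starRingEnd ℂ (G p)) ∧
      (∫⁻ p in Set.Ioi (0 : ℝ), ENNReal.ofReal (p * ‖G p‖ ^ 2) < ⊤) ∧
      Tendsto (fun n => ∫⁻ p in Set.Ioi (0 : ℝ),
        ENNReal.ofReal (p * ‖F n p - G p‖ ^ 2)) atTop (𝓝 0) :=
  stmt12_general F hmeas hfin hcauchy
end

section
/- For k ∈ ℤ, k ≠ 0, let f_k(x) := ((1+ix)/(1−ix))^k (the function z^k on the circle under the stereographic identification), and let g_k := f_k − f_k(∞) = f_k − (−1)^k. Then the Fourier transform of g_k is supported in ℝ₊ if k > 0 and in ℝ₋ if k < 0; equivalently, ĝ_k(p) = 0 for sign(k)·p < 0. -/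
/-!
The map `w(z) = (1 + iz)/(1 - iz)` sends the closed upper half-plane holomorphically into the
closed unit disc, with `w(∞) = -1`. Since `w + 1 = 2/(1 - iz)` and `|z| ≤ |1 - iz|` there,
`g_n = w^n - (-1)^n` satisfies `|z| |g_n(z)| ≤ 2n` on the upper half-plane. For `q > 0` we have
`|e^{iqz}| = e^{-q Im z}`, so Cauchy's theorem on the square `[-R, R] × [0, R]` replaces
`∫_{-R}^{R} g_n(x) e^{iqx} dx` by the integrals over the three upper sides, which are
`O(e^{-qR})` and `O(1/(qR))`. For `k < 0`, the substitution `x ↦ -x` turns `w` into `w⁻¹`.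
-/

open Filter Topology intervalIntegral Complex Set

theorem norm_pow_sub_pow_le_of_norm_le_one {A : Type*} [SeminormedRing A] [NormOneClass A]
    {u v : A} (hu : ‖u‖ ≤ 1) (hv : ‖v‖ ≤ 1) (n : ℕ) : ‖u ^ n - v ^ n‖ ≤ n * ‖u - v‖ := by
  induction n with
  | zero => simp
  | succ n ih =>
    have hvn : ‖v ^ n‖ ≤ 1 := (norm_pow_le v n).trans (pow_le_one₀ (norm_nonneg v) hv)
    calc ‖u ^ (n + 1) - v ^ (n + 1)‖ = ‖u * (u ^ n - v ^ n) + (u - v) * v ^ n‖ := by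
          rw [pow_succ', pow_succ']; noncomm_ring
      _ ≤ ‖u‖ * ‖u ^ n - v ^ n‖ + ‖u - v‖ * ‖v ^ n‖ :=
          (norm_add_le _ _).trans (add_le_add (norm_mul_le _ _) (norm_mul_le _ _))
      _ ≤ 1 * (n * ‖u - v‖) + ‖u - v‖ * 1 := by gcongr
      _ = (n + 1 : ℕ) * ‖u - v‖ := by push_cast; ring

theorem integral_eq_integral_upper_sides_square {E : Type*} [NormedAddCommGroup E]
    [NormedSpace ℂ E] [CompleteSpace E] {f : ℂ → E} {R : ℝ}
    (hf : DifferentiableOn ℂ f (uIcc (-R) R ×ℂ uIcc 0 R)) :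
    ∫ x in (-R)..R, f x = (∫ x in (-R)..R, f (x + R * I))
      - I • (∫ y in (0 : ℝ)..R, f (R + y * I)) + I • ∫ y in (0 : ℝ)..R, f (-R + y * I) := by
  have H := integral_boundary_rect_eq_zero_of_differentiableOn f (-R) (R + R * I)
    (by simpa using hf)
  simp only [neg_re, neg_im, ofReal_re, ofReal_im, add_re, add_im, mul_re, mul_im, I_re, I_im,
    mul_zero, mul_one, sub_zero, zero_add, add_zero, neg_zero, ofReal_zero, zero_mul,
    ofReal_neg] at H
  rw [← sub_eq_zero, ← H]
  abel

theorem integral_exp_neg_mul_le {q : ℝ} (hq : 0 < q) (R : ℝ) :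
    ∫ y in (0 : ℝ)..R, Real.exp (-(q * y)) ≤ 1 / q := by
  have h := integral_comp_mul_left (a := 0) (b := R) (fun y => Real.exp (-y)) hq.ne'
  simp only [mul_zero, integral_comp_neg, neg_zero, integral_exp, smul_eq_mul] at h
  rw [h, Real.exp_zero, one_div]
  exact mul_le_of_le_one_right (inv_nonneg.2 hq.le) (by linarith [Real.exp_pos (-(q * R))])

section UpperHalfPlane

variable {f : ℂ → ℂ} {C q R : ℝ}

theorem norm_mul_cexp_le (hbound : ∀ z : ℂ, 0 ≤ z.im → ‖z‖ * ‖f z‖ ≤ C) (hR : 0 < R)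
    {z : ℂ} (hz : 0 ≤ z.im) (hRz : R ≤ ‖z‖) :
    ‖f z * cexp (I * q * z)‖ ≤ C / R * Real.exp (-(q * z.im)) := by
  have hexp : ‖cexp (I * q * z)‖ = Real.exp (-(q * z.im)) := by
    rw [norm_exp]; congr 1; simp [mul_re, mul_im]
  rw [norm_mul, hexp]
  gcongr
  rw [le_div_iff₀ hR]
  calc ‖f z‖ * R ≤ ‖z‖ * ‖f z‖ := by rw [mul_comm]; gcongr
    _ ≤ C := hbound z hz

theorem norm_integral_top_side_le (hbound : ∀ z : ℂ, 0 ≤ z.im → ‖z‖ * ‖f z‖ ≤ C)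
    (hR : 0 < R) :
    ‖∫ x in (-R)..R, f (x + R * I) * cexp (I * q * (x + R * I))‖
      ≤ 2 * C * Real.exp (-(q * R)) := by
  have hle (x : ℝ) :
      ‖f (x + R * I) * cexp (I * q * (x + R * I))‖ ≤ C / R * Real.exp (-(q * R)) := by
    have him : (x + R * I).im = R := by simp
    have hRz : R ≤ ‖x + R * I‖ := by
      simpa [him, abs_of_pos hR] using abs_im_le_norm (x + R * I)
    simpa [him] using norm_mul_cexp_le (q := q) hbound hR (hR.le.trans him.ge) hRz
  refine (norm_integral_le_of_norm_le_const fun x _ => hle x).trans_eq ?_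
  rw [sub_neg_eq_add, abs_of_pos (by linarith)]
  field_simp
  ring

theorem norm_integral_vertical_side_le (hbound : ∀ z : ℂ, 0 ≤ z.im → ‖z‖ * ‖f z‖ ≤ C)
    (hq : 0 < q) (hR : 0 < R) {s : ℝ} (hs : R ≤ |s|) :
    ‖∫ y in (0 : ℝ)..R, f (s + y * I) * cexp (I * q * (s + y * I))‖ ≤ C / (q * R) := by
  have hle (y : ℝ) (hy : 0 ≤ y) :
      ‖f (s + y * I) * cexp (I * q * (s + y * I))‖ ≤ C / R * Real.exp (-(q * y)) := by
    have him : (s + y * I).im = y := by simp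
    have hRz : R ≤ ‖s + y * I‖ := hs.trans (by simpa using abs_re_le_norm (s + y * I))
    simpa [him] using norm_mul_cexp_le (q := q) hbound hR (hy.trans him.ge) hRz
  have hC : 0 ≤ C := by simpa using hbound 0 le_rfl
  calc _ ≤ ∫ y in (0 : ℝ)..R, C / R * Real.exp (-(q * y)) :=
        norm_integral_le_of_norm_le hR.le (Eventually.of_forall fun y hy => hle y hy.1.le)
          (Continuous.intervalIntegrable (by fun_prop) _ _)
    _ ≤ C / R * (1 / q) := by
        rw [integral_const_mul]; gcongr; exact integral_exp_neg_mul_le hq R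
    _ = C / (q * R) := by field_simp

theorem tendsto_integral_mul_cexp_of_upperHalfPlane (hq : 0 < q)
    (hf : DifferentiableOn ℂ f {z | 0 ≤ z.im})
    (hbound : ∀ z : ℂ, 0 ≤ z.im → ‖z‖ * ‖f z‖ ≤ C) :
    Tendsto (fun R : ℝ => ∫ x in (-R)..R, f x * cexp (I * q * x)) atTop (𝓝 0) := by
  have hdecay : Tendsto (fun R : ℝ => 2 * C * Real.exp (-(q * R)) + 2 * (C / (q * R)))
      atTop (𝓝 0) := by
    have hqR : Tendsto (fun R : ℝ => q * R) atTop atTop := tendsto_id.const_mul_atTop hq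
    have h₁ := (Real.tendsto_exp_atBot.comp (tendsto_neg_atTop_atBot.comp hqR)).const_mul (2 * C)
    have h₂ := (tendsto_const_nhds (x := C)).div_atTop hqR
    simpa using h₁.add (h₂.const_mul 2)
  refine squeeze_zero_norm' ?_ hdecay
  filter_upwards [eventually_gt_atTop 0] with R hR
  rw [integral_eq_integral_upper_sides_square (f := fun z => f z * cexp (I * q * z))]
  · have h₁ := norm_integral_top_side_le (q := q) hbound hR
    have h₂ := norm_integral_vertical_side_le hbound hq hR (s := R) (abs_of_pos hR).ge
    have h₃ := norm_integral_vertical_side_le hbound hq hR (s := -R)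
      (by rw [abs_neg, abs_of_pos hR])
    push_cast at h₃
    refine (norm_add_le _ _).trans ((add_le_add (norm_sub_le _ _) le_rfl).trans ?_)
    simp only [norm_smul, norm_I, one_mul]
    linarith
  · refine (hf.mul (differentiable_id.const_mul _).cexp.differentiableOn).mono fun z hz => ?_
    simpa [min_eq_left hR.le] using (mem_reProdIm.1 hz).2.1

end UpperHalfPlane

noncomputable def cayley (z : ℂ) : ℂ := (1 + I * z) / (1 - I * z)

section cayley

variable {z : ℂ}

theorem normSq_one_sub_I_mul (z : ℂ) : normSq (1 - I * z) = (1 + z.im) ^ 2 + z.re ^ 2 := by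
  simp [normSq_apply]; ring

theorem one_sub_I_mul_ne_zero (hz : 0 ≤ z.im) : 1 - I * z ≠ 0 := by
  rw [← normSq_pos, normSq_one_sub_I_mul]; positivity

theorem norm_le_norm_one_sub_I_mul (hz : 0 ≤ z.im) : ‖z‖ ≤ ‖1 - I * z‖ := by
  rw [← sq_le_sq₀ (norm_nonneg _) (norm_nonneg _), Complex.sq_norm, Complex.sq_norm,
    normSq_one_sub_I_mul, normSq_apply]
  nlinarith

theorem norm_cayley_le_one (hz : 0 ≤ z.im) : ‖cayley z‖ ≤ 1 := by
  rw [cayley, norm_div, div_le_one (norm_pos_iff.2 (one_sub_I_mul_ne_zero hz)),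
    ← sq_le_sq₀ (norm_nonneg _) (norm_nonneg _), Complex.sq_norm, Complex.sq_norm,
    normSq_one_sub_I_mul]
  simp [normSq_apply]
  nlinarith

theorem cayley_add_one (hz : 1 - I * z ≠ 0) : cayley z + 1 = 2 / (1 - I * z) := by
  rw [cayley]; field_simp; ring

theorem cayley_neg (z : ℂ) : cayley (-z) = (cayley z)⁻¹ := by
  simp [cayley, inv_div, sub_eq_add_neg]

theorem differentiableOn_cayley : DifferentiableOn ℂ cayley {z | 0 ≤ z.im} := fun _ hz =>
  ((by fun_prop : Differentiable ℂ fun z : ℂ => 1 + I * z) _).div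
    ((by fun_prop : Differentiable ℂ fun z : ℂ => 1 - I * z) _) (one_sub_I_mul_ne_zero hz)
    |>.differentiableWithinAt

theorem norm_mul_norm_cayley_pow_sub_le (hz : 0 ≤ z.im) (n : ℕ) :
    ‖z‖ * ‖cayley z ^ n - (-1) ^ n‖ ≤ 2 * n := by
  have hw := one_sub_I_mul_ne_zero hz
  have h := norm_pow_sub_pow_le_of_norm_le_one (norm_cayley_le_one hz)
    (by simp : ‖(-1 : ℂ)‖ ≤ 1) n
  rw [sub_neg_eq_add, cayley_add_one hw, norm_div, Complex.norm_two] at h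
  calc ‖z‖ * ‖cayley z ^ n - (-1) ^ n‖ ≤ ‖1 - I * z‖ * (n * (2 / ‖1 - I * z‖)) := by
        gcongr
        exact norm_le_norm_one_sub_I_mul hz
    _ = 2 * n := by field_simp [norm_ne_zero_iff.2 hw]

end cayley

theorem tendsto_integral_cayley_pow_sub_mul_cexp (n : ℕ) {q : ℝ} (hq : 0 < q) :
    Tendsto (fun R : ℝ => ∫ x in (-R)..R, (cayley x ^ n - (-1) ^ n) * cexp (I * q * x))
      atTop (𝓝 0) :=
  tendsto_integral_mul_cexp_of_upperHalfPlane (f := fun z => cayley z ^ n - (-1) ^ n) hq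
    ((differentiableOn_cayley.pow n).sub_const _)
    (fun _ hz => norm_mul_norm_cayley_pow_sub_le hz n)

theorem stmt14_general (k : ℤ) (p : ℝ) (hp : (Int.sign k : ℝ) * p < 0) :
    Tendsto (fun R : ℝ => ∫ x in (-R)..R,
        (((1 + Complex.I * x) / (1 - Complex.I * x)) ^ k - (-1 : ℂ) ^ k)
          * Complex.exp (-(Complex.I * p * x)))
      atTop (𝓝 0) := by
  obtain ⟨n, rfl | rfl⟩ := Int.eq_nat_or_neg k
  · rcases eq_or_ne n 0 with rfl | hn
    · simp at hp
    rw [Int.sign_natCast_of_ne_zero hn] at hp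
    refine (tendsto_integral_cayley_pow_sub_mul_cexp n (q := -p) (by simpa using hp)).congr
      fun R => integral_congr fun x _ => ?_
    simp [cayley]
  · rcases eq_or_ne n 0 with rfl | hn
    · simp at hp
    rw [Int.sign_neg, Int.sign_natCast_of_ne_zero hn] at hp
    have hF (x : ℝ) : (((1 + I * x) / (1 - I * x)) ^ (-(n : ℤ)) - (-1 : ℂ) ^ (-(n : ℤ)))
        * cexp (-(I * p * x)) = (cayley ↑(-x) ^ n - (-1) ^ n) * cexp (I * p * ↑(-x)) := by
      rw [zpow_neg, zpow_neg, zpow_natCast, zpow_natCast, ofReal_neg, cayley_neg, inv_pow,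
        ← inv_pow (-1 : ℂ), inv_neg_one, mul_neg]
      rfl
    simp_rw [hF, integral_comp_neg (fun x : ℝ => (cayley x ^ n - (-1) ^ n) * cexp (I * p * x)),
      neg_neg]
    exact tendsto_integral_cayley_pow_sub_mul_cexp n (by simpa using hp)

/-- For `k ∈ ℤ`, `k ≠ 0`, `f_k(x) = ((1+ix)/(1−ix))^k` and `g_k = f_k − (−1)^k`,
the Fourier transform of `g_k` (convention `ĝ(p) = c ∫ g(x) e^{-ipx} dx`) vanishes
for `sign(k)·p < 0`: the improper integral `∫_{-R}^{R} g_k(x) e^{-ipx} dx` tends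
to `0` as `R → ∞`. -/
theorem stmt14 (k : ℤ) (hk : k ≠ 0) (p : ℝ) (hp : (Int.sign k : ℝ) * p < 0) :
    Tendsto (fun R : ℝ => ∫ x in (-R)..R,
        (((1 + Complex.I * x) / (1 - Complex.I * x)) ^ k - (-1 : ℂ) ^ k)
          * Complex.exp (-(Complex.I * p * x)))
      atTop (𝓝 0) :=
  stmt14_general k p hp
end

section
/- Let D(q_B) := { f ∈ H : f'|_{(−1,1)} ∈ L²((−1,1), (1−x²)dx) } and q_B(f) := π ∫_{−1}^{1} (1−x²)|f'(x)|² dx, where H is the one-particle Hilbert space of the U(1) current (completion of C^∞_c(ℝ) in the norm ‖f‖² = ∫_0^∞ p|f̂(p)|²dp). Then the quadratic form q_B is closed: if f_n → f in H and q_B(f_n − f_m) → 0, then f ∈ D(q_B) and q_B(f_n − f) → 0. -/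
/-!
The sequence `G n` is Cauchy in `L²((1-x²)dx)`, so it has a limit `Glim` there. Both sides of
the identity `∫ G φ = ∫ (-ip F(p)) φ̂(-p) dp` are continuous in the data: the left side is the
`L²((1-x²)dx)` pairing of `G` with `φ/(1-x²)`, which is bounded since `φ` is supported in a
compact subset of `(-1,1)`; the right side is the `L²(|p|dp)` pairing of `F` with
`-i sgn(p) φ̂(-p)`, which lies in `L²(|p|dp)` because `φ̂` is a Schwartz function, and for
`F(-p) = conj F(p)` the `L²(|p|dp)` norm is a multiple of the `H`-norm. Passing to the limit in
the identity shows that `Glim` represents `f'`.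
-/

open MeasureTheory Filter Topology Real

/-- The Fourier transform `φ̂(p) = (2π)^{-1/2} ∫ φ(x) e^{ipx} dx` of a real function. -/
noncomputable def fhat (g : ℝ → ℝ) (p : ℝ) : ℂ :=
  (Real.sqrt (2 * π) : ℂ)⁻¹ * ∫ x : ℝ, (g x : ℂ) * Complex.exp (Complex.I * p * x)

open scoped ENNReal
open Set FourierTransform

section WeightedL2

variable {α E : Type*} [MeasurableSpace α] [NormedAddCommGroup E]

lemma eLpNorm_two_withDensity_ofReal_sq (μ : Measure α) {w : α → ℝ} (hw : Measurable w)
    (f : α → E) :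
    eLpNorm f 2 (μ.withDensity fun x => ENNReal.ofReal (w x)) ^ 2
      = ∫⁻ x, ENNReal.ofReal (w x * ‖f x‖ ^ 2) ∂μ := by
  have h := eLpNorm_nnreal_pow_eq_lintegral (f := f)
    (μ := μ.withDensity fun x => ENNReal.ofReal (w x)) (p := 2) two_ne_zero
  simp only [NNReal.coe_ofNat, ENNReal.coe_ofNat, ENNReal.rpow_two] at h
  rw [h, lintegral_withDensity_eq_lintegral_mul_non_measurable _ (by fun_prop) (by simp)]
  congr 1 with x
  rw [Pi.mul_apply, ENNReal.ofReal_mul' (by positivity), ENNReal.ofReal_pow (norm_nonneg _),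
    ofReal_norm]

variable [CompleteSpace E] {μ : Measure α}

lemma exists_tendsto_eLpNorm_of_cauchy {p : ℝ≥0∞} [Fact (1 ≤ p)] {f : ℕ → α → E}
    (hf : ∀ n, MemLp (f n) p μ)
    (hcau : ∀ ε : ℝ, 0 < ε → ∃ N, ∀ n ≥ N, ∀ k ≥ N, eLpNorm (f n - f k) p μ < ENNReal.ofReal ε) :
    ∃ g, StronglyMeasurable g ∧ MemLp g p μ ∧
      Tendsto (fun n => eLpNorm (f n - g) p μ) atTop (𝓝 0) := by
  set u : ℕ → Lp E p μ := fun n => (hf n).toLp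
  have hu : CauchySeq u := by
    refine EMetric.cauchySeq_iff.2 fun ε hε => ?_
    obtain ⟨r, hr, hrε⟩ := ENNReal.lt_iff_exists_real_btwn.1 hε
    obtain ⟨N, hN⟩ := hcau r (ENNReal.ofReal_pos.1 hrε.1)
    exact ⟨N, fun n hn k hk => by
      rw [Lp.edist_toLp_toLp]; exact (hN n hn k hk).trans hrε.2⟩
  obtain ⟨L, hL⟩ := cauchySeq_tendsto_of_complete hu
  have hLm := Lp.aestronglyMeasurable L
  refine ⟨hLm.mk L, hLm.stronglyMeasurable_mk, (Lp.memLp L).ae_eq hLm.ae_eq_mk, ?_⟩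
  have hdist : ∀ n, eLpNorm (f n - hLm.mk L) p μ = edist (u n) L := fun n => by
    rw [Lp.edist_def]
    refine eLpNorm_congr_ae ?_
    filter_upwards [(hf n).coeFn_toLp, hLm.ae_eq_mk] with x h1 h2
    simp [u, h1, h2]
  simpa only [hdist] using (tendsto_iff_edist_tendsto_0 ..).1 hL

end WeightedL2

lemma tendsto_integral_mul_of_tendsto_eLpNorm {α 𝕜 : Type*} [MeasurableSpace α] [RCLike 𝕜]
    {μ : Measure α} {f : ℕ → α → 𝕜} {g h : α → 𝕜}
    (hf : ∀ n, MemLp (f n) 2 μ) (hg : MemLp g 2 μ) (hh : MemLp h 2 μ)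
    (hfg : Tendsto (fun n => eLpNorm (f n - g) 2 μ) atTop (𝓝 0)) :
    Tendsto (fun n => ∫ x, f n x * h x ∂μ) atTop (𝓝 (∫ x, g x * h x ∂μ)) := by
  refine tendsto_integral_of_L1' _ (hg.integrable_mul hh).aestronglyMeasurable
    (Eventually.of_forall fun n => (hf n).integrable_mul hh) ?_
  have holder : ∀ n, eLpNorm ((fun x => f n x * h x) - fun x => g x * h x) 1 μ
      ≤ eLpNorm (f n - g) 2 μ * eLpNorm h 2 μ := fun n => by
    convert eLpNorm_le_eLpNorm_mul_eLpNorm'_of_norm (p := 2) (q := 2) (r := 1)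
      ((hf n).sub hg).1 hh.1 (· * ·) 1 (Eventually.of_forall fun x => by simp [norm_mul])
      using 2
    · ext x; simp [sub_mul]
    · simp
  refine tendsto_of_tendsto_of_tendsto_of_le_of_le tendsto_const_nhds ?_ (fun _ => zero_le)
    holder
  simpa using ENNReal.Tendsto.mul_const hfg (Or.inr hh.eLpNorm_ne_top)

lemma lintegral_eq_two_mul_setLIntegral_Ioi_of_even {h : ℝ → ℝ≥0∞} (heven : ∀ x, h (-x) = h x) :
    ∫⁻ x, h x = 2 * ∫⁻ x in Ioi 0, h x := by
  have hIic : ∫⁻ x in Iic 0, h x = ∫⁻ x in Ioi 0, h x := by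
    rw [setLIntegral_congr Ioi_ae_eq_Ici, ← lintegral_indicator measurableSet_Iic,
      ← lintegral_indicator measurableSet_Ici, ← lintegral_neg_eq_self]
    congr 1 with x
    simp [indicator, heven]
  rw [← lintegral_add_compl h measurableSet_Iic, compl_Iic, hIic, two_mul]

lemma SchwartzMap.integrable_abs_mul_norm_sq {E : Type*} [NormedAddCommGroup E]
    [NormedSpace ℝ E] (ψ : SchwartzMap ℝ E) : Integrable fun p => |p| * ‖ψ p‖ ^ 2 := by
  have h := (ψ.integrable_pow_mul volume 1).mul_bdd (c := ‖ψ.toBoundedContinuousFunction‖)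
    (by fun_prop : Continuous fun p => ‖ψ p‖).aestronglyMeasurable
    (Eventually.of_forall fun p => by
      simpa using ψ.toBoundedContinuousFunction.norm_coe_le_norm p)
  refine h.congr (Eventually.of_forall fun p => ?_)
  simp only [pow_one, Real.norm_eq_abs]
  ring

lemma exists_schwartzMap_eq_fhat_neg (φ : SchwartzMap ℝ ℝ) :
    ∃ ψ : SchwartzMap ℝ ℂ, ∀ p, ψ p = fhat φ (-p) := by
  let φℂ : SchwartzMap ℝ ℂ := SchwartzMap.postcompCLM (𝕜 := ℝ) Complex.ofRealCLM φ
  let scale : ℝ ≃L[ℝ] ℝ :=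
    ContinuousLinearEquiv.unitsEquivAut ℝ (Units.mk0 (2 * π)⁻¹ (by positivity))
  refine ⟨(Real.sqrt (2 * π) : ℂ)⁻¹ •
    SchwartzMap.compCLMOfContinuousLinearEquiv ℂ scale (𝓕 φℂ), fun p => ?_⟩
  change (Real.sqrt (2 * π) : ℂ)⁻¹ * 𝓕 (φℂ : ℝ → ℂ) (p * (2 * π)⁻¹) = fhat φ (-p)
  rw [fhat, Real.fourier_real_eq_integral_exp_smul]
  congr 2 with x
  rw [smul_eq_mul, mul_comm]
  congr 2
  push_cast
  field_simp

section Momentum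

noncomputable def volumeAbs : Measure ℝ := volume.withDensity fun p => ENNReal.ofReal |p|

lemma eLpNorm_volumeAbs_sq {E : Type*} [NormedAddCommGroup E] {F : ℝ → E}
    (heven : ∀ p, ‖F (-p)‖ = ‖F p‖) :
    eLpNorm F 2 volumeAbs ^ 2 = 2 * ∫⁻ p in Ioi 0, ENNReal.ofReal (p * ‖F p‖ ^ 2) := by
  rw [volumeAbs, eLpNorm_two_withDensity_ofReal_sq _ continuous_abs.measurable,
    lintegral_eq_two_mul_setLIntegral_Ioi_of_even (by simp [heven])]
  congr 1
  exact setLIntegral_congr_fun measurableSet_Ioi fun p hp => by rw [abs_of_pos hp]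

lemma memLp_volumeAbs {E : Type*} [NormedAddCommGroup E] {F : ℝ → E}
    (hF : AEStronglyMeasurable F volumeAbs) (heven : ∀ p, ‖F (-p)‖ = ‖F p‖)
    (hfin : ∫⁻ p in Ioi 0, ENNReal.ofReal (p * ‖F p‖ ^ 2) < ⊤) :
    MemLp F 2 volumeAbs := by
  have h : eLpNorm F 2 volumeAbs ^ 2 < ⊤ := by
    rw [eLpNorm_volumeAbs_sq heven]
    exact ENNReal.mul_lt_top ENNReal.ofNat_lt_top hfin
  exact ⟨hF, by simpa using h⟩

lemma integral_volumeAbs_div_abs_smul {E : Type*} [NormedAddCommGroup E] [NormedSpace ℝ E]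
    (f : ℝ → E) : ∫ p, (p / |p|) • f p ∂volumeAbs = ∫ p, p • f p := by
  rw [volumeAbs, integral_withDensity_eq_integral_toReal_smul (by fun_prop)
    (Eventually.of_forall fun _ => ENNReal.ofReal_lt_top)]
  congr 1 with p
  rw [ENNReal.toReal_ofReal (abs_nonneg p), smul_smul]
  rcases eq_or_ne p 0 with rfl | hp
  · simp
  · rw [mul_div_cancel₀ _ (abs_ne_zero.2 hp)]

lemma memLp_fhat_neg (φ : SchwartzMap ℝ ℝ) : MemLp (fun p => fhat φ (-p)) 2 volumeAbs := by
  obtain ⟨ψ, hψ⟩ := exists_schwartzMap_eq_fhat_neg φ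
  have hψ' : (fun p => fhat φ (-p)) = ψ := funext fun p => (hψ p).symm
  rw [hψ']
  have h : eLpNorm ψ 2 volumeAbs ^ 2 < ⊤ := by
    rw [volumeAbs, eLpNorm_two_withDensity_ofReal_sq _ continuous_abs.measurable]
    exact ψ.integrable_abs_mul_norm_sq.lintegral_lt_top
  exact ⟨ψ.continuous.aestronglyMeasurable, by simpa using h⟩

lemma tendsto_integral_mul_fhat_neg {F : ℕ → ℝ → ℂ} {Flim : ℝ → ℂ}
    (hFmeas : ∀ n, Measurable (F n)) (hFlimmeas : Measurable Flim)
    (hFreal : ∀ n, ∀ p : ℝ, F n (-p) = starRingEnd ℂ (F n p))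
    (hFlimreal : ∀ p : ℝ, Flim (-p) = starRingEnd ℂ (Flim p))
    (hFfin : ∀ n, ∫⁻ p in Ioi 0, ENNReal.ofReal (p * ‖F n p‖ ^ 2) < ⊤)
    (hFlimfin : ∫⁻ p in Ioi 0, ENNReal.ofReal (p * ‖Flim p‖ ^ 2) < ⊤)
    (hconv : Tendsto (fun n => ∫⁻ p in Ioi 0, ENNReal.ofReal (p * ‖F n p - Flim p‖ ^ 2))
      atTop (𝓝 0))
    (φ : SchwartzMap ℝ ℝ) :
    Tendsto (fun n => ∫ p : ℝ, (-(Complex.I) * p * F n p) * fhat φ (-p)) atTop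
      (𝓝 (∫ p : ℝ, (-(Complex.I) * p * Flim p) * fhat φ (-p))) := by
  have hmem : ∀ n, MemLp (F n) 2 volumeAbs := fun n =>
    memLp_volumeAbs (hFmeas n).aestronglyMeasurable (by simp [hFreal]) (hFfin n)
  have hmemlim : MemLp Flim 2 volumeAbs :=
    memLp_volumeAbs hFlimmeas.aestronglyMeasurable (by simp [hFlimreal]) hFlimfin
  have hsq : Tendsto (fun n => eLpNorm (F n - Flim) 2 volumeAbs ^ 2) atTop (𝓝 0) := by
    simp_rw [eLpNorm_volumeAbs_sq (F := F _ - Flim) (by simp [hFreal, hFlimreal, ← map_sub])]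
    simpa using ENNReal.Tendsto.const_mul hconv (Or.inr ENNReal.ofNat_ne_top)
  have hlim : Tendsto (fun n => eLpNorm (F n - Flim) 2 volumeAbs) atTop (𝓝 0) := by
    have h := ((ENNReal.continuous_rpow_const (y := ((2 : ℕ) : ℝ)⁻¹)).tendsto 0).comp hsq
    simpa only [Function.comp_def, ENNReal.pow_rpow_inv_natCast two_ne_zero,
      ENNReal.zero_rpow_of_pos (by norm_num : (0 : ℝ) < ((2 : ℕ) : ℝ)⁻¹)] using h
  -- `p = |p| · sgn p`, so the right-hand side pairs `F` with `-i sgn(p) φ̂(-p)` in `L²(|p| dp)`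
  set b : ℝ → ℂ := fun p => (p / |p| : ℝ) * (-(Complex.I) * fhat φ (-p))
  have hb : MemLp b 2 volumeAbs := by
    refine (memLp_fhat_neg φ).of_le ((by fun_prop : Measurable fun p : ℝ =>
      ((p / |p| : ℝ) : ℂ)).aestronglyMeasurable.mul
        (aestronglyMeasurable_const.mul (memLp_fhat_neg φ).1)) (Eventually.of_forall fun p => ?_)
    simp only [b, norm_mul, norm_neg, Complex.norm_I, one_mul, Complex.norm_real, norm_div,
      norm_abs_eq_norm]
    exact mul_le_of_le_one_left (norm_nonneg _) (div_self_le_one _)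
  have hpair : ∀ f : ℝ → ℂ, ∫ p : ℝ, (-(Complex.I) * p * f p) * fhat φ (-p)
      = ∫ p, f p * b p ∂volumeAbs := fun f =>
    calc ∫ p : ℝ, (-(Complex.I) * p * f p) * fhat φ (-p)
        = ∫ p : ℝ, p • (f p * (-(Complex.I) * fhat φ (-p))) := by
          congr 1 with p; rw [Complex.real_smul]; ring
      _ = ∫ p, (p / |p|) • (f p * (-(Complex.I) * fhat φ (-p))) ∂volumeAbs :=
          (integral_volumeAbs_div_abs_smul _).symm
      _ = ∫ p, f p * b p ∂volumeAbs := by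
          congr 1 with p; simp only [b, Complex.real_smul]; ring
  simp_rw [hpair]
  exact tendsto_integral_mul_of_tendsto_eLpNorm hmem hmemlim hb hlim

end Momentum

section Position

noncomputable def volumeOneSubSq : Measure ℝ :=
  (volume.restrict (Ioo (-1) 1)).withDensity fun x => ENNReal.ofReal (1 - x ^ 2)

instance : IsFiniteMeasure volumeOneSubSq :=
  isFiniteMeasure_withDensity_ofReal
    ((by fun_prop : Continuous fun x : ℝ => 1 - x ^ 2).integrableOn_Icc.mono_set
      Ioo_subset_Icc_self).hasFiniteIntegral

lemma eLpNorm_volumeOneSubSq_sq (g : ℝ → ℝ) :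
    eLpNorm g 2 volumeOneSubSq ^ 2
      = ∫⁻ x in Ioo (-1) 1, ENNReal.ofReal ((1 - x ^ 2) * g x ^ 2) := by
  rw [volumeOneSubSq, eLpNorm_two_withDensity_ofReal_sq _ (by fun_prop)]
  simp only [Real.norm_eq_abs, sq_abs]

lemma integral_volumeOneSubSq_mul_div (g φ : ℝ → ℝ) :
    ∫ x, g x * (φ x / (1 - x ^ 2)) ∂volumeOneSubSq = ∫ x in Ioo (-1) 1, g x * φ x := by
  rw [volumeOneSubSq, integral_withDensity_eq_integral_toReal_smul (by fun_prop)
    (Eventually.of_forall fun _ => ENNReal.ofReal_lt_top)]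
  refine setIntegral_congr_fun measurableSet_Ioo fun x hx => ?_
  have hx' : 0 < 1 - x ^ 2 := by nlinarith [hx.1, hx.2]
  rw [ENNReal.toReal_ofReal hx'.le, smul_eq_mul]
  field_simp

lemma memLp_volumeOneSubSq_div {φ : ℝ → ℝ} (hφ : Continuous φ)
    (hsupp : tsupport φ ⊆ Ioo (-1) 1) :
    MemLp (fun x => φ x / (1 - x ^ 2)) 2 volumeOneSubSq := by
  have hK : IsCompact (tsupport φ) :=
    Metric.isCompact_of_isClosed_isBounded (isClosed_tsupport φ)
      ((Metric.isBounded_Ioo (-1 : ℝ) 1).subset hsupp)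
  obtain ⟨C, hC⟩ := hK.exists_bound_of_continuousOn (f := fun x => φ x / (1 - x ^ 2))
    (hφ.continuousOn.div (by fun_prop) fun x hx => by
      nlinarith [(hsupp hx).1, (hsupp hx).2])
  refine MemLp.of_bound (hφ.measurable.div (by fun_prop)).aestronglyMeasurable (max C 0)
    (Eventually.of_forall fun x => ?_)
  by_cases hx : x ∈ tsupport φ
  · exact (hC x hx).trans (le_max_left _ _)
  · simp [image_eq_zero_of_notMem_tsupport hx]

end Position

/-- Elements of `H` are encoded by their Fourier transforms `F` (with `F(-p) = conj F(p)`), and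
membership of `f_n` in `D(q_B)` by the function `G n` representing `f_n'` on `(-1, 1)`. -/
theorem stmt15 (F : ℕ → ℝ → ℂ) (Flim : ℝ → ℂ)
    (hFmeas : ∀ n, Measurable (F n)) (hFlimmeas : Measurable Flim)
    (hFreal : ∀ n, ∀ p : ℝ, F n (-p) = starRingEnd ℂ (F n p))
    (hFlimreal : ∀ p : ℝ, Flim (-p) = starRingEnd ℂ (Flim p))
    (hFfin : ∀ n, ∫⁻ p in Set.Ioi (0 : ℝ), ENNReal.ofReal (p * ‖F n p‖ ^ 2) < ⊤)
    (hFlimfin : ∫⁻ p in Set.Ioi (0 : ℝ), ENNReal.ofReal (p * ‖Flim p‖ ^ 2) < ⊤)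
    (hconv : Tendsto (fun n => ∫⁻ p in Set.Ioi (0 : ℝ),
      ENNReal.ofReal (p * ‖F n p - Flim p‖ ^ 2)) atTop (𝓝 0))
    (G : ℕ → ℝ → ℝ) (hGmeas : ∀ n, Measurable (G n))
    (hGfin : ∀ n, ∫⁻ x in Set.Ioo (-1 : ℝ) 1,
      ENNReal.ofReal ((1 - x ^ 2) * (G n x) ^ 2) < ⊤)
    (hrep : ∀ n, ∀ φ : SchwartzMap ℝ ℝ, tsupport ⇑φ ⊆ Set.Ioo (-1 : ℝ) 1 →
      ((∫ x in Set.Ioo (-1 : ℝ) 1, G n x * φ x : ℝ) : ℂ)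
        = ∫ p : ℝ, (-(Complex.I) * p * F n p) * fhat ⇑φ (-p))
    (hGcauchy : ∀ ε : ℝ, 0 < ε → ∃ N : ℕ, ∀ n ≥ N, ∀ k ≥ N,
      ∫⁻ x in Set.Ioo (-1 : ℝ) 1,
        ENNReal.ofReal ((1 - x ^ 2) * (G n x - G k x) ^ 2) < ENNReal.ofReal ε) :
    ∃ Glim : ℝ → ℝ, Measurable Glim ∧
      (∫⁻ x in Set.Ioo (-1 : ℝ) 1, ENNReal.ofReal ((1 - x ^ 2) * (Glim x) ^ 2) < ⊤) ∧
      (∀ φ : SchwartzMap ℝ ℝ, tsupport ⇑φ ⊆ Set.Ioo (-1 : ℝ) 1 →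
        ((∫ x in Set.Ioo (-1 : ℝ) 1, Glim x * φ x : ℝ) : ℂ)
          = ∫ p : ℝ, (-(Complex.I) * p * Flim p) * fhat ⇑φ (-p)) ∧
      Tendsto (fun n => ∫⁻ x in Set.Ioo (-1 : ℝ) 1,
        ENNReal.ofReal ((1 - x ^ 2) * (G n x - Glim x) ^ 2)) atTop (𝓝 0) := by
  have hmem : ∀ n, MemLp (G n) 2 volumeOneSubSq := fun n =>
    ⟨(hGmeas n).aestronglyMeasurable, by simpa [← eLpNorm_volumeOneSubSq_sq] using hGfin n⟩
  have hcau : ∀ ε : ℝ, 0 < ε → ∃ N, ∀ n ≥ N, ∀ k ≥ N,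
      eLpNorm (G n - G k) 2 volumeOneSubSq < ENNReal.ofReal ε := fun ε hε => by
    obtain ⟨N, hN⟩ := hGcauchy (ε ^ 2) (by positivity)
    refine ⟨N, fun n hn k hk => ?_⟩
    rw [← ENNReal.pow_lt_pow_left_iff two_ne_zero, eLpNorm_volumeOneSubSq_sq,
      ← ENNReal.ofReal_pow hε.le]
    exact hN n hn k hk
  obtain ⟨Glim, hGlim_sm, hGlim_mem, hGlim⟩ := exists_tendsto_eLpNorm_of_cauchy hmem hcau
  refine ⟨Glim, hGlim_sm.measurable, ?_, fun φ hφ => ?_, ?_⟩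
  · simpa [← eLpNorm_volumeOneSubSq_sq] using hGlim_mem.eLpNorm_lt_top
  · have hG : Tendsto (fun n => ∫ x in Ioo (-1) 1, G n x * φ x) atTop
        (𝓝 (∫ x in Ioo (-1) 1, Glim x * φ x)) := by
      simp_rw [← integral_volumeOneSubSq_mul_div]
      exact tendsto_integral_mul_of_tendsto_eLpNorm hmem hGlim_mem
        (memLp_volumeOneSubSq_div φ.continuous hφ) hGlim
    refine tendsto_nhds_unique ?_ (tendsto_integral_mul_fhat_neg hFmeas hFlimmeas hFreal
      hFlimreal hFfin hFlimfin hconv φ)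
    simpa only [Function.comp_def, hrep _ φ hφ] using (Complex.continuous_ofReal.tendsto _).comp hG
  · simpa only [eLpNorm_volumeOneSubSq_sq, Pi.sub_apply, zero_pow two_ne_zero] using
      ENNReal.Tendsto.pow (n := 2) hGlim
end
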